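/- A single increase that keeps the sorted order yields domination for LPT: if x' differs from x only at index j where x'_j = x_j + ε with ε > 0, and the nonincreasing sorted orders of x and x' agree (the increased element stays in the same sorted position), then the bin-sum vector of LPT(x', m) dominates that of LPT(x, m). -/

import Mathlib

open scoped Classical

/-- The bin chosen by List Scheduling: the smallest-index bin with minimal current sum. -/
noncomputable def lsIndex {m : ℕ} (hm : 0 < m) (v : Fin m → ℝ) : Fin m :=
  (Finset.univ.filter fun i => ∀ j, v i ≤ v j).min' (by
    obtain ⟨i, -, hi⟩ := Finset.exists_min_image Finset.univ v ⟨⟨0, hm⟩, Finset.mem_univ _⟩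
    exact ⟨i, Finset.mem_filter.mpr ⟨Finset.mem_univ _, fun j => hi j (Finset.mem_univ _)⟩⟩)

/-- One step of List Scheduling: place `x` into the chosen bin. -/
noncomputable def lsStep {m : ℕ} (hm : 0 < m) (v : Fin m → ℝ) (x : ℝ) : Fin m → ℝ :=
  Function.update v (lsIndex hm v) (v (lsIndex hm v) + x)

/-- The vector of bin sums after List Scheduling processes the list `xs` into `m` bins. -/
noncomputable def lsSums {m : ℕ} (hm : 0 < m) (xs : List ℝ) : Fin m → ℝ :=
  xs.foldl (lsStep hm) (fun _ => 0)

/-- `s` dominates `t` iff some permutation `π` satisfies `s (π i) ≥ t i` for all `i`. -/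
def Dominates {m : ℕ} (s t : Fin m → ℝ) : Prop :=
  ∃ π : Equiv.Perm (Fin m), ∀ i, t i ≤ s (π i)


/-- Sort a list of reals in nonincreasing order. -/
noncomputable def sortDesc (xs : List ℝ) : List ℝ :=
  xs.mergeSort (fun a b => decide (b ≤ a))

/-- The bin sums produced by the Longest Processing Time (LPT) algorithm:
sort the inputs in nonincreasing order, then run List Scheduling. -/
noncomputable def lptSums {m : ℕ} (hm : 0 < m) (xs : List ℝ) : Fin m → ℝ :=
  lsSums hm (sortDesc xs)

/-! List Scheduling is monotone for domination. If `s` dominates `t`, the witnessing permutation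
can be chosen to send the bin of `t` that receives `b` to the bin of `s` that receives `a` (both
are minimal, so a transposition repairs any witness); hence `a ≥ b` keeps the domination. The two
sorted input lists differ only in the increased entry, so they are pointwise ordered, and
induction along them gives the theorem. -/

open Function

theorem lsIndex_le {m : ℕ} (hm : 0 < m) (v : Fin m → ℝ) (i : Fin m) :
    v (lsIndex hm v) ≤ v i := by
  unfold lsIndex
  exact (Finset.mem_filter.mp
    (Finset.min'_mem (Finset.univ.filter fun i => ∀ j, v i ≤ v j) _)).2 i

theorem List.forall₂_ge_set {α : Type*} [Preorder α] {l : List α} {k : ℕ} {v w : α}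
    (hk : l[k]? = some v) (hvw : v ≤ w) : List.Forall₂ (· ≥ ·) (l.set k w) l := by
  rw [List.forall₂_iff_get]
  refine ⟨List.length_set, fun i hi _ => ?_⟩
  obtain ⟨hk, rfl⟩ := List.getElem?_eq_some_iff.mp hk
  simp only [List.get_eq_getElem, List.getElem_set]
  split_ifs with h
  · exact h ▸ hvw
  · exact le_rfl

namespace Dominates

variable {m : ℕ}

@[refl]
theorem refl (s : Fin m → ℝ) : Dominates s s :=
  ⟨1, fun _ => le_rfl⟩

theorem exists_perm_apply_eq {s t : Fin m → ℝ} (h : Dominates s t) {p q : Fin m}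
    (hp : ∀ i, t p ≤ t i) (hq : ∀ i, s q ≤ s i) :
    ∃ π : Equiv.Perm (Fin m), π p = q ∧ ∀ i, t i ≤ s (π i) := by
  obtain ⟨π, hπ⟩ := h
  refine ⟨Equiv.swap q (π p) * π, by simp, fun i => ?_⟩
  rw [Equiv.Perm.mul_apply]
  rcases eq_or_ne (π i) q with hiq | hiq
  · rw [hiq, Equiv.swap_apply_left]
    exact (hπ i).trans (hiq ▸ hq _)
  rcases eq_or_ne i p with rfl | hip
  · rw [Equiv.swap_apply_right]
    calc t i ≤ t (π.symm q) := hp _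
      _ ≤ s q := by simpa using hπ (π.symm q)
  · rw [Equiv.swap_apply_of_ne_of_ne hiq (π.injective.ne hip)]
    exact hπ i

theorem update {s t : Fin m → ℝ} {p q : Fin m} (π : Equiv.Perm (Fin m)) (hπp : π p = q)
    (hπ : ∀ i, t i ≤ s (π i)) {a b : ℝ} (hab : b ≤ a) :
    Dominates (update s q a) (update t p b) := by
  refine ⟨π, fun i => ?_⟩
  rcases eq_or_ne i p with rfl | hip
  · simpa [hπp] using hab
  · rw [update_of_ne hip, update_of_ne (hπp ▸ π.injective.ne hip)]
    exact hπ i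

theorem lsStep (hm : 0 < m) {s t : Fin m → ℝ} (h : Dominates s t) {a b : ℝ} (hab : b ≤ a) :
    Dominates (lsStep hm s a) (lsStep hm t b) := by
  obtain ⟨π, hπp, hπ⟩ := h.exists_perm_apply_eq (lsIndex_le hm t) (lsIndex_le hm s)
  exact .update π hπp hπ (add_le_add (hπp ▸ hπ _) hab)

theorem foldl_lsStep (hm : 0 < m) {as bs : List ℝ} (hab : List.Forall₂ (· ≥ ·) as bs)
    {s t : Fin m → ℝ} (h : Dominates s t) :
    Dominates (as.foldl (_root_.lsStep hm) s) (bs.foldl (_root_.lsStep hm) t) := by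
  induction hab generalizing s t with
  | nil => exact h
  | cons hab _ ih => exact ih (h.lsStep hm hab)

end Dominates

theorem lsSums_dominates_of_forall₂_ge {m : ℕ} (hm : 0 < m) {as bs : List ℝ}
    (hab : List.Forall₂ (· ≥ ·) as bs) : Dominates (lsSums hm as) (lsSums hm bs) :=
  Dominates.foldl_lsStep hm hab (.refl _)

/-- A single increase that keeps the sorted order yields domination for LPT:
if `x'` differs from `x` only at index `j` where it is larger by `ε > 0`, and the
nonincreasing sorted order of `x'` is obtained from that of `x` by replacing the
occurrence of `x j` (at its sorted position `k`) by `x j + ε`, then the bin-sum vector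
of LPT on `x'` dominates that of LPT on `x`. -/
theorem lpt_single_increase_same_order_dominates {m n : ℕ} (hm : 2 ≤ m) (x : Fin n → ℝ)
    (j : Fin n) (ε : ℝ) (hε : 0 < ε) (k : ℕ)
    (hk : (sortDesc (List.ofFn x))[k]? = some (x j))
    (hsort : sortDesc (List.ofFn (Function.update x j (x j + ε))) =
      (sortDesc (List.ofFn x)).set k (x j + ε)) :
    Dominates (lptSums (by omega : 0 < m) (List.ofFn (Function.update x j (x j + ε))))
      (lptSums (by omega : 0 < m) (List.ofFn x)) :=
  lsSums_dominates_of_forall₂_ge _ <|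
    hsort ▸ List.forall₂_ge_set hk (le_add_of_nonneg_right hε.le)
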